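/- Let δ = (δ_1,…,δ_r) be a degree sequence with 1 ≤ δ_i and 2δ_i² ≤ r (i.e., δ_i ≤ √(r/2)) for all i, and fix distinct x, y ∈ {1,…,r}. Let H be a graph on vertex set {1,…,r} in which vertex x has degree δ_x + 1, vertex y has degree δ_y − 1, and every other vertex i has degree δ_i. Then there exists a sequence of distinct vertices x = w_0, w_1, …, w_q = y with q ∈ {2, 4}, such that {w_i, w_{i+1}} is an edge of H for every even i and a non-edge of H for every odd i (0 ≤ i ≤ q−1); that is, there is an alternating path of even length at most four from x to y, starting with an edge and ending with a co-edge. -/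
import Mathlib


open SimpleGraph

/-- The degree of vertex `v` in graph `G`. -/
noncomputable def deg {r : ℕ} (G : SimpleGraph (Fin r)) (v : Fin r) : ℕ :=
  (G.neighborSet v).ncard

/-- An alternating path of length `q` from `u` to `v` in `G`: a sequence of
`q+1` distinct vertices starting at `u` and ending at `v` such that
consecutive pairs are edges at even positions and non-edges at odd positions
(so it starts with an edge and, for even `q`, ends with a co-edge). -/
def altPath {r : ℕ} (G : SimpleGraph (Fin r)) (u v : Fin r) (q : ℕ) : Prop :=
  ∃ w : ℕ → Fin r, w 0 = u ∧ w q = v ∧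
    (∀ i j, i ≤ q → j ≤ q → w i = w j → i = j) ∧
    (∀ i < q, (Even i → G.Adj (w i) (w (i+1))) ∧ (¬ Even i → ¬ G.Adj (w i) (w (i+1))))

/-- Lemma D.4, following Jerrum–Sinclair. Let `δ` be a degree
sequence on `{1,…,r}` with `1 ≤ δᵢ ≤ √(r/2)` for all `i`, and let `H` realize
the perturbation of `δ` with surplus one at `x` and deficit one at `y`. Then
there is an alternating path from `x` to `y` in `H` of even length at most four,
starting with an edge and ending with a co-edge. -/
theorem stmt17 {r : ℕ} (δ : Fin r → ℕ)
    (hlo : ∀ i, 1 ≤ δ i) (hhi : ∀ i, 2 * (δ i) ^ 2 ≤ r)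
    (x y : Fin r) (hxy : x ≠ y)
    (H : SimpleGraph (Fin r))
    (hx : deg H x = δ x + 1) (hy : deg H y + 1 = δ y)
    (hother : ∀ i, i ≠ x → i ≠ y → deg H i = δ i) :
    ∃ q, (q = 2 ∨ q = 4) ∧ altPath H x y q := by
  classical
  have hdeg : ∀ v, (H.neighborFinset v).card = deg H v := by
    intro v
    rw [deg, neighborFinset_def, Set.ncard_eq_toFinset_card']
  -- a neighbor of x different from y
  obtain ⟨a, hax, hay_ne⟩ : ∃ a, H.Adj x a ∧ a ≠ y := by
    have h2 : 2 ≤ (H.neighborFinset x).card := by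
      rw [hdeg, hx]; have := hlo x; omega
    have h3 : ((H.neighborFinset x).erase y).Nonempty := by
      rw [← Finset.card_pos]
      have := Finset.pred_card_le_card_erase (s := H.neighborFinset x) (a := y)
      omega
    obtain ⟨a, ha⟩ := h3
    obtain ⟨h1, h2'⟩ := Finset.mem_erase.mp ha
    exact ⟨a, (mem_neighborFinset _ _ _).mp h2', h1⟩
  by_cases h2 : ∃ b, H.Adj x b ∧ b ≠ y ∧ ¬ H.Adj b y
  · -- length-2 path
    obtain ⟨b, hb1, hb2, hb3⟩ := h2
    have hxb : x ≠ b := hb1.ne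
    refine ⟨2, Or.inl rfl, fun i => if i = 0 then x else if i = 1 then b else y,
      by simp, by simp, ?_, ?_⟩
    · intro i j hi hj hw
      interval_cases i <;> interval_cases j <;> simp_all
    · intro i hi
      interval_cases i
      · exact ⟨fun _ => by simpa using hb1, fun h => absurd (by decide) h⟩
      · exact ⟨fun h => absurd h (by decide), fun _ => by simpa using hb3⟩
  · -- every neighbor of x other than y is adjacent to y; in particular a is
    have haY : H.Adj a y := by
      by_contra hcon
      exact h2 ⟨a, hax, hay_ne, hcon⟩
    by_cases h4 : ∃ b c, H.Adj b c ∧ ¬ H.Adj a b ∧ ¬ H.Adj c y ∧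
        b ≠ x ∧ b ≠ y ∧ b ≠ a ∧ c ≠ x ∧ c ≠ y ∧ c ≠ a
    · -- length-4 path
      obtain ⟨b, c, hbc, hab, hcy, hbx, hby, hba, hcx, hcy', hca⟩ := h4
      have hxa : x ≠ a := hax.ne
      have hbc' : b ≠ c := hbc.ne
      refine ⟨4, Or.inr rfl, fun i => if i = 0 then x else if i = 1 then a else
        if i = 2 then b else if i = 3 then c else y, by simp, by simp, ?_, ?_⟩
      · intro i j hi hj hw
        interval_cases i <;> interval_cases j <;> simp_all
      · intro i hi
        interval_cases i
        · exact ⟨fun _ => by simpa using hax, fun h => absurd (by decide) h⟩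
        · exact ⟨fun h => absurd h (by decide), fun _ => by simpa using hab⟩
        · exact ⟨fun _ => by simpa using hbc, fun h => absurd (by decide) h⟩
        · exact ⟨fun h => absurd h (by decide), fun _ => by simpa using hcy⟩
    · -- counting contradiction
      exfalso
      have hne : (Finset.univ : Finset (Fin r)).Nonempty := ⟨x, Finset.mem_univ x⟩
      obtain ⟨m, hδm, hrm⟩ : ∃ m, (∀ i, δ i ≤ m) ∧ 2 * m ^ 2 ≤ r := by
        refine ⟨Finset.univ.sup δ, fun i => Finset.le_sup (Finset.mem_univ i), ?_⟩
        obtain ⟨i0, -, hi0⟩ := Finset.exists_mem_eq_sup _ hne δ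
        rw [hi0]; exact hhi i0
      have hax' : a ≠ x := hax.ne'
      have hxNa : x ∈ H.neighborFinset a := (mem_neighborFinset _ _ _).mpr hax.symm
      have hyNa : y ∈ H.neighborFinset a := (mem_neighborFinset _ _ _).mpr haY
      have haNy : a ∈ H.neighborFinset y := (mem_neighborFinset _ _ _).mpr haY.symm
      have hda : (H.neighborFinset a).card = δ a := by
        rw [hdeg]; exact hother a hax' hay_ne
      have hda2 : 2 ≤ δ a := by
        rw [← hda]
        have : ({x, y} : Finset (Fin r)) ⊆ H.neighborFinset a := by
          intro t ht
          rcases Finset.mem_insert.mp ht with h | h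
          · rwa [h]
          · rw [Finset.mem_singleton.mp h]; exact hyNa
        calc 2 = ({x, y} : Finset (Fin r)).card := by rw [Finset.card_insert_of_notMem (by simpa using hxy), Finset.card_singleton]
        _ ≤ _ := Finset.card_le_card this
      set Cand : Finset (Fin r) := Finset.univ \ (H.neighborFinset y ∪ {x, y}) with hCand
      have hCandmem : ∀ c, c ∈ Cand ↔ (c ∉ H.neighborFinset y ∧ c ≠ x ∧ c ≠ y) := by
        intro c
        simp [hCand, Finset.mem_sdiff, Finset.mem_union, Finset.mem_insert, not_or]
        tauto
      have hxC : x ∉ Cand := by rw [hCandmem]; tauto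
      have hyC : y ∉ Cand := by rw [hCandmem]; tauto
      have haC : a ∉ Cand := by rw [hCandmem]; tauto
      -- lower bound on Cand.card
      have hdy : (H.neighborFinset y).card + 1 = δ y := by rw [hdeg]; exact hy
      have hlower : r - (δ y + 1) ≤ Cand.card := by
        have h1 : Cand.card = r - (H.neighborFinset y ∪ {x, y}).card := by
          rw [hCand, Finset.card_sdiff_of_subset (Finset.subset_univ _), Finset.card_univ, Fintype.card_fin]
        have h2' : (H.neighborFinset y ∪ {x, y}).card ≤ δ y + 1 := by
          calc (H.neighborFinset y ∪ {x, y}).card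
              ≤ (H.neighborFinset y).card + ({x, y} : Finset (Fin r)).card :=
                Finset.card_union_le _ _
            _ ≤ (H.neighborFinset y).card + 2 := by
                have := Finset.card_insert_le x ({y} : Finset (Fin r))
                simp only [Finset.card_singleton] at this
                omega
            _ ≤ δ y + 1 := by omega
        omega
      -- every candidate's neighborhood lies in insert a (N a)
      have hsub : ∀ c ∈ Cand, H.neighborFinset c ⊆ insert a (H.neighborFinset a) := by
        intro c hc b hb
        by_contra hbn
        obtain ⟨hcny, hcx, hcy'⟩ := (hCandmem c).mp hc
        have hba : b ≠ a := fun h => hbn (by rw [h]; exact Finset.mem_insert_self _ _)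
        have hbna : b ∉ H.neighborFinset a := fun h => hbn (Finset.mem_insert_of_mem h)
        have hab : ¬ H.Adj a b := fun h => hbna ((mem_neighborFinset _ _ _).mpr h)
        have hbx : b ≠ x := fun h => hbna (by rw [h]; exact hxNa)
        have hby : b ≠ y := fun h => hbna (by rw [h]; exact hyNa)
        have hca : c ≠ a := fun h => hcny (by rw [h]; exact haNy)
        have hcy2 : ¬ H.Adj c y := fun h => hcny ((mem_neighborFinset _ _ _).mpr h.symm)
        exact h4 ⟨b, c, ((mem_neighborFinset _ _ _).mp hb).symm, hab, hcy2,
          hbx, hby, hba, hcx, hcy', hca⟩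
      -- Cand is covered by neighborhoods of insert a (N a)
      have hcover : Cand ⊆ (insert a (H.neighborFinset a)).biUnion
          (fun t => H.neighborFinset t ∩ Cand) := by
        intro c hc
        obtain ⟨hcny, hcx, hcy'⟩ := (hCandmem c).mp hc
        have hdc : (H.neighborFinset c).card = δ c := by rw [hdeg]; exact hother c hcx hcy'
        have hcne : (H.neighborFinset c).Nonempty := by
          rw [← Finset.card_pos, hdc]; exact hlo c
        obtain ⟨b, hb⟩ := hcne
        refine Finset.mem_biUnion.mpr ⟨b, hsub c hc hb, Finset.mem_inter.mpr ⟨?_, hc⟩⟩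
        exact (mem_neighborFinset _ _ _).mpr ((mem_neighborFinset _ _ _).mp hb).symm
      have hupper : Cand.card ≤ ∑ t ∈ insert a (H.neighborFinset a),
          (H.neighborFinset t ∩ Cand).card :=
        le_trans (Finset.card_le_card hcover) (Finset.card_biUnion_le)
      -- split off t = a
      have hanotin : a ∉ H.neighborFinset a := by
        simp [mem_neighborFinset]
      rw [Finset.sum_insert hanotin] at hupper
      -- bound the a-term
      have hterm_a : (H.neighborFinset a ∩ Cand).card ≤ δ a - 2 := by
        have hs : H.neighborFinset a ∩ Cand ⊆ H.neighborFinset a \ {x, y} := by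
          intro t ht
          obtain ⟨h1, h2'⟩ := Finset.mem_inter.mp ht
          refine Finset.mem_sdiff.mpr ⟨h1, ?_⟩
          intro hmem
          rcases Finset.mem_insert.mp hmem with h | h
          · exact hxC (h ▸ h2')
          · exact hyC ((Finset.mem_singleton.mp h) ▸ h2')
        have hxy2 : ({x, y} : Finset (Fin r)) ⊆ H.neighborFinset a := by
          intro t ht
          rcases Finset.mem_insert.mp ht with h | h
          · rwa [h]
          · rw [Finset.mem_singleton.mp h]; exact hyNa
        have := Finset.card_le_card hs
        rwa [Finset.card_sdiff_of_subset hxy2, Finset.card_insert_of_notMem (by simpa using hxy),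
          Finset.card_singleton, hda] at this
      -- split the sum over N a as {x,y} ∪ rest
      have hNa_eq : ({x, y} : Finset (Fin r)) ∪ (H.neighborFinset a \ {x, y})
          = H.neighborFinset a := by
        apply Finset.union_sdiff_of_subset
        intro t ht
        rcases Finset.mem_insert.mp ht with h | h
        · rwa [h]
        · rw [Finset.mem_singleton.mp h]; exact hyNa
      have hdisj : Disjoint ({x, y} : Finset (Fin r)) (H.neighborFinset a \ {x, y}) :=
        Finset.disjoint_sdiff
      have hsum_split : ∑ t ∈ H.neighborFinset a, (H.neighborFinset t ∩ Cand).card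
          = (H.neighborFinset x ∩ Cand).card + (H.neighborFinset y ∩ Cand).card
            + ∑ t ∈ H.neighborFinset a \ {x, y}, (H.neighborFinset t ∩ Cand).card := by
        conv_lhs => rw [← hNa_eq]
        rw [Finset.sum_union hdisj, Finset.sum_insert (by simpa using hxy),
          Finset.sum_singleton]
      -- term y is zero
      have hterm_y : (H.neighborFinset y ∩ Cand).card = 0 := by
        rw [Finset.card_eq_zero]
        ext t
        simp only [Finset.mem_inter, Finset.notMem_empty, iff_false, not_and]
        intro ht hc
        exact absurd ht ((hCandmem t).mp hc).1
      -- term x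
      have hdx : (H.neighborFinset x).card = δ x + 1 := by rw [hdeg]; exact hx
      have hterm_x : (H.neighborFinset x ∩ Cand).card ≤ δ x := by
        have hs : H.neighborFinset x ∩ Cand ⊆ (H.neighborFinset x).erase a := by
          intro t ht
          obtain ⟨h1, h2'⟩ := Finset.mem_inter.mp ht
          exact Finset.mem_erase.mpr ⟨fun h => haC (h ▸ h2'), h1⟩
        have := Finset.card_le_card hs
        rw [Finset.card_erase_of_mem ((mem_neighborFinset _ _ _).mpr hax), hdx] at this
        omega
      -- remaining terms
      have hterm_rest : ∑ t ∈ H.neighborFinset a \ {x, y}, (H.neighborFinset t ∩ Cand).card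
          ≤ (δ a - 2) * (m - 1) := by
        have hcard_rest : (H.neighborFinset a \ {x, y}).card = δ a - 2 := by
          have hxy2 : ({x, y} : Finset (Fin r)) ⊆ H.neighborFinset a := by
            intro t ht
            rcases Finset.mem_insert.mp ht with h | h
            · rwa [h]
            · rw [Finset.mem_singleton.mp h]; exact hyNa
          rw [Finset.card_sdiff_of_subset hxy2, Finset.card_insert_of_notMem (by simpa using hxy),
            Finset.card_singleton, hda]
        calc ∑ t ∈ H.neighborFinset a \ {x, y}, (H.neighborFinset t ∩ Cand).card
            ≤ ∑ _t ∈ H.neighborFinset a \ {x, y}, (m - 1) := by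
              apply Finset.sum_le_sum
              intro t ht
              obtain ⟨htNa, htxy⟩ := Finset.mem_sdiff.mp ht
              have htx : t ≠ x := fun h => htxy (by rw [h]; exact Finset.mem_insert_self _ _)
              have hty : t ≠ y := fun h => htxy (by rw [h]; simp)
              have hdt : (H.neighborFinset t).card = δ t := by
                rw [hdeg]; exact hother t htx hty
              have haNt : a ∈ H.neighborFinset t :=
                (mem_neighborFinset _ _ _).mpr ((mem_neighborFinset _ _ _).mp htNa).symm
              have hs : H.neighborFinset t ∩ Cand ⊆ (H.neighborFinset t).erase a := by
                intro u hu
                obtain ⟨h1, h2'⟩ := Finset.mem_inter.mp hu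
                exact Finset.mem_erase.mpr ⟨fun h => haC (h ▸ h2'), h1⟩
              have := Finset.card_le_card hs
              rw [Finset.card_erase_of_mem haNt, hdt] at this
              have := hδm t
              omega
          _ = (δ a - 2) * (m - 1) := by rw [Finset.sum_const, smul_eq_mul, hcard_rest]
      -- put everything together
      have hfinal : r - (δ y + 1) ≤ (δ a - 2) + (δ x + 0 + (δ a - 2) * (m - 1)) := by
        calc r - (δ y + 1) ≤ Cand.card := hlower
          _ ≤ (H.neighborFinset a ∩ Cand).card
              + ∑ t ∈ H.neighborFinset a, (H.neighborFinset t ∩ Cand).card := hupper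
          _ ≤ (δ a - 2) + (δ x + 0 + (δ a - 2) * (m - 1)) := by
              rw [hsum_split, hterm_y]
              exact Nat.add_le_add hterm_a (Nat.add_le_add (Nat.add_le_add hterm_x le_rfl) hterm_rest)
      have hm2 : 2 ≤ m := le_trans hda2 (hδm a)
      have hdam : δ a ≤ m := hδm a
      have hdxm : δ x ≤ m := hδm x
      have hdym : δ y ≤ m := hδm y
      have hmul : (δ a - 2) * (m - 1) ≤ (m - 2) * (m - 1) :=
        Nat.mul_le_mul_right _ (by omega)
      obtain ⟨k, hk⟩ : ∃ k, m = k + 2 := ⟨m - 2, by omega⟩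
      have h1 : r ≤ (m - 2) + m + (m - 2) * (m - 1) + (δ y + 1) := by omega
      have e1 : m - 2 = k := by omega
      have e2 : m - 1 = k + 1 := by omega
      rw [e1, e2, hk] at h1
      rw [hk] at hrm
      have hdy2 : δ y ≤ k + 2 := by omega
      have h2' : r ≤ k + (k + 2) + k * (k + 1) + (k + 2 + 1) := by omega
      clear * - h2' hrm
      nlinarith [h2', hrm]
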